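/- arXiv:1210.7473 — 3 statements merged into one kernel-verified Lean document; each statement's English description precedes it below -/
import Mathlib

section
/- For q ≠ 1, the function I_q(p) = -k·ln 2·(p^{1-q} - 1)/(2^{1-q} - 1) with k > 0 satisfies the pseudoadditivity relation I_q(p₁p₂)/k = I_q(p₁)/k + I_q(p₂)/k + φ(q)·(I_q(p₁)/k)·(I_q(p₂)/k) with φ(q) = (1 - 2^{1-q})/ln 2, for all p₁,p₂ ∈ (0,1]. -/
/-! With `u = p ^ (1 - q)` and `b = 2 ^ (1 - q)`, `I_q(p) / k` is an affine function of `u`,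
and `p ↦ u` is multiplicative on `p > 0`. The relation is then the identity
`u v - 1 = (u - 1) + (v - 1) + (u - 1)(v - 1)` after rescaling by `-ln 2 / (b - 1)`. -/

theorem neg_mul_sub_one_div_mul (L b u v : ℝ) (hL : L ≠ 0) (hb : b ≠ 1) :
    -L * ((u * v - 1) / (b - 1)) =
      -L * ((u - 1) / (b - 1)) + -L * ((v - 1) / (b - 1)) +
        (1 - b) / L * (-L * ((u - 1) / (b - 1))) * (-L * ((v - 1) / (b - 1))) := by
  have hb' : b - 1 ≠ 0 := sub_ne_zero.mpr hb
  field_simp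
  ring

theorem Real.two_rpow_ne_one {a : ℝ} (ha : a ≠ 0) : (2 : ℝ) ^ a ≠ 1 := by
  rw [← Real.rpow_zero 2, Ne, Real.rpow_right_inj two_pos (by norm_num)]
  exact ha

theorem stmt6_general (k q : ℝ) (hk : 0 < k) (hq1 : q ≠ 1)
    (I : ℝ → ℝ) (hI : ∀ p, I p = -k * Real.log 2 * ((p ^ (1 - q) - 1) / ((2:ℝ) ^ (1 - q) - 1)))
    (φq : ℝ) (hφ : φq = (1 - (2:ℝ) ^ (1 - q)) / Real.log 2) :
    ∀ p₁ ∈ Set.Ioc (0:ℝ) 1, ∀ p₂ ∈ Set.Ioc (0:ℝ) 1,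
      I (p₁ * p₂) / k = I p₁ / k + I p₂ / k + φq * (I p₁ / k) * (I p₂ / k) := by
  intro p₁ hp₁ p₂ hp₂
  have hI_div : ∀ p, I p / k = -Real.log 2 * ((p ^ (1 - q) - 1) / ((2:ℝ) ^ (1 - q) - 1)) :=
    fun p => by rw [hI]; field_simp
  rw [hI_div, hI_div, hI_div, Real.mul_rpow hp₁.1.le hp₂.1.le, hφ]
  exact neg_mul_sub_one_div_mul _ _ _ _ (Real.log_pos one_lt_two).ne'
    (Real.two_rpow_ne_one (sub_ne_zero.mpr hq1.symm))

theorem stmt6 (k q : ℝ) (hk : 0 < k) (hq : 0 < q) (hq1 : q ≠ 1)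
    (I : ℝ → ℝ) (hI : ∀ p, I p = -k * Real.log 2 * ((p ^ (1 - q) - 1) / ((2:ℝ) ^ (1 - q) - 1)))
    (φq : ℝ) (hφ : φq = (1 - (2:ℝ) ^ (1 - q)) / Real.log 2) :
    ∀ p₁ ∈ Set.Ioc (0:ℝ) 1, ∀ p₂ ∈ Set.Ioc (0:ℝ) 1,
      I (p₁ * p₂) / k = I p₁ / k + I p₂ / k + φq * (I p₁ / k) * (I p₂ / k) :=
  stmt6_general k q hk hq1 I hI φq hφ
end

section
/- Let p^A, p^B be probability distributions on {1,…,W} with all entries positive, k > 0, φ(q) > 0, α(q) ≤ 0 (or φ(q) < 0 and α(q) ∈ [0,1]). Define K_q(p^A‖p^B) = Σ_i (p_i^A)^{-α(q)+1} · (k/φ(q))·((p_i^B)^{α(q)} - (p_i^A)^{α(q)}). Then K_q(p^A‖p^B) ≥ 0. -/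
/-- Bernoulli-type inequality for nonpositive exponents: `x ^ a ≥ 1 + a * (x - 1)`. -/
lemma bern_neg {x : ℝ} (hx : 0 < x) {a : ℝ} (ha : a ≤ 0) :
    1 + a * (x - 1) ≤ x ^ a := by
  set b : ℝ := -a with hb
  have hb0 : 0 ≤ b := by simp [hb]; linarith
  have hxa : x ^ a = (x ^ b)⁻¹ := by
    rw [show a = -b by rw [hb]; ring, Real.rpow_neg hx.le]
  have hgoal : 1 + a * (x - 1) = 1 - b * (x - 1) := by rw [hb]; ring
  rcases le_or_gt b 1 with hb1 | hb1
  · have h1 : (1 + (x - 1)) ^ b ≤ 1 + b * (x - 1) :=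
      rpow_one_add_le_one_add_mul_self (by linarith) hb0 hb1
    have h1' : x ^ b ≤ 1 + b * (x - 1) := by simpa using h1
    have hxb : 0 < x ^ b := Real.rpow_pos_of_pos hx b
    have hpos : 0 < 1 + b * (x - 1) := lt_of_lt_of_le hxb h1'
    have h2 : (1 + b * (x - 1))⁻¹ ≤ (x ^ b)⁻¹ := inv_anti₀ hxb h1'
    have h3 : 1 - b * (x - 1) ≤ (1 + b * (x - 1))⁻¹ := by
      rw [inv_eq_one_div, le_div_iff₀ hpos]
      nlinarith [sq_nonneg (b * (x - 1))]
    rw [hxa]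
    linarith
  · have h1 : 1 + b * (x⁻¹ - 1) ≤ (1 + (x⁻¹ - 1)) ^ b :=
      one_add_mul_self_le_rpow_one_add (by have := inv_pos.mpr hx; linarith) hb1.le
    have h1' : 1 + b * (x⁻¹ - 1) ≤ (x ^ b)⁻¹ := by
      have heq : (1 + (x⁻¹ - 1)) ^ b = (x ^ b)⁻¹ := by
        rw [show 1 + (x⁻¹ - 1) = x⁻¹ by ring, Real.inv_rpow hx.le]
      linarith [heq ▸ h1]
    have key : 1 - b * (x - 1) ≤ 1 + b * (x⁻¹ - 1) := by
      have hx' : x⁻¹ + x - 2 ≥ 0 := by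
        have h := sq_nonneg (x - 1)
        have hmul : x * (x⁻¹ + x - 2) = (x - 1) ^ 2 := by
          field_simp; ring
        nlinarith
      nlinarith
    rw [hxa]
    linarith

/-- Bernoulli-type inequality for exponents in `[0,1]`: `x ^ a ≤ 1 + a * (x - 1)`. -/
lemma bern_pos {x : ℝ} (hx : 0 < x) {a : ℝ} (h0 : 0 ≤ a) (h1 : a ≤ 1) :
    x ^ a ≤ 1 + a * (x - 1) := by
  have := rpow_one_add_le_one_add_mul_self (s := x - 1) (by linarith) h0 h1
  simpa using this

theorem stmt16 (W : ℕ) (pA pB : Fin W → ℝ)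
    (hpA : ∀ i, 0 < pA i) (hpB : ∀ i, 0 < pB i)
    (hsA : ∑ i, pA i = 1) (hsB : ∑ i, pB i = 1)
    (k φ α : ℝ) (hk : 0 < k)
    (hsign : (0 < φ ∧ α ≤ 0) ∨ (φ < 0 ∧ 0 ≤ α ∧ α ≤ 1)) :
    0 ≤ ∑ i, (pA i) ^ (-α + 1) * (k / φ * ((pB i) ^ α - (pA i) ^ α)) := by
  have hterm : ∀ i, (pA i) ^ (-α + 1) * (k / φ * ((pB i) ^ α - (pA i) ^ α))
      = k / φ * (pA i * ((pB i / pA i) ^ α - 1)) := by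
    intro i
    have hA := hpA i
    have hB := hpB i
    have hdiv : (pB i / pA i) ^ α = pB i ^ α / pA i ^ α :=
      Real.div_rpow hB.le hA.le α
    have hsplit : (pA i) ^ (-α + 1) = (pA i) ^ (-α) * pA i := by
      rw [Real.rpow_add hA, Real.rpow_one]
    have hneg : (pA i) ^ (-α) = ((pA i) ^ α)⁻¹ := Real.rpow_neg hA.le α
    have hApow : (0:ℝ) < (pA i) ^ α := Real.rpow_pos_of_pos hA α
    rw [hdiv, hsplit, hneg]
    field_simp
  rw [Finset.sum_congr rfl (fun i _ => hterm i), ← Finset.mul_sum]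
  have hsum_lin : ∑ i, pA i * (pB i / pA i - 1) = 0 := by
    have h : ∀ i, pA i * (pB i / pA i - 1) = pB i - pA i := by
      intro i
      rw [mul_sub, mul_div_cancel₀ _ (hpA i).ne', mul_one]
    rw [Finset.sum_congr rfl (fun i _ => h i), Finset.sum_sub_distrib, hsA, hsB]
    ring
  have hsum_lin' : ∑ i, α * (pA i * (pB i / pA i - 1)) = 0 := by
    rw [← Finset.mul_sum, hsum_lin, mul_zero]
  rcases hsign with ⟨hφ, hα⟩ | ⟨hφ, hα0, hα1⟩
  · have hS : 0 ≤ ∑ i, pA i * ((pB i / pA i) ^ α - 1) := by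
      have hbound : ∀ i ∈ Finset.univ, α * (pA i * (pB i / pA i - 1)) ≤
          pA i * ((pB i / pA i) ^ α - 1) := by
        intro i _
        have hx : 0 < pB i / pA i := div_pos (hpB i) (hpA i)
        have hber := bern_neg hx hα
        nlinarith [(hpA i)]
      have := Finset.sum_le_sum hbound
      linarith [hsum_lin' ▸ this]
    positivity
  · have hS : ∑ i, pA i * ((pB i / pA i) ^ α - 1) ≤ 0 := by
      have hbound : ∀ i ∈ Finset.univ, pA i * ((pB i / pA i) ^ α - 1) ≤
          α * (pA i * (pB i / pA i - 1)) := by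
        intro i _
        have hx : 0 < pB i / pA i := div_pos (hpB i) (hpA i)
        have hber := bern_pos hx hα0 hα1
        nlinarith [(hpA i)]
      have := Finset.sum_le_sum hbound
      linarith [hsum_lin' ▸ this]
    have hc : k / φ < 0 := div_neg_of_pos_of_neg hk hφ
    nlinarith
end

section
/- For fixed q, k ≠ 0, φ(q) ≠ 0, every function I : (0,1] → ℝ that is continuous, not identically zero, satisfies I(1) = 0, and satisfies I(p₁p₂)/k = I(p₁)/k + I(p₂)/k + φ(q)·(I(p₁)/k)·(I(p₂)/k) for all p₁,p₂ ∈ (0,1], is of the form I(p) = (k/φ(q))·(p^α - 1) for some real α. -/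
/-! The substitution `f = 1 + φ I / k` turns the pseudoadditivity equation into
`f (p₁ p₂) = f p₁ f p₂` on `(0, 1]`, and `u x = f (exp (-x))` turns that into
`u (x + y) = u x u y` on `[0, ∞)`. A continuous such `u` with `u 0 = 1` is positive, because
`u x = u (x / n) ^ n` and `u (x / n) → 1`; so `log ∘ u` is a continuous additive function on
`[0, ∞)`, hence linear, and `f p = p ^ α`. -/

open Set Filter Topology Real

section HalfLine

variable {g : ℝ → ℝ}

/-- Since `x = max x 0 - max (-x) 0`, a function additive on `[0, ∞)` extends through this
formula to an additive function on `ℝ`. -/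
def oddExtension (g : ℝ → ℝ) (x : ℝ) : ℝ := g (max x 0) - g (max (-x) 0)

theorem sub_eq_sub_of_additiveOn (hg : ∀ x y, 0 ≤ x → 0 ≤ y → g (x + y) = g x + g y)
    {a b c d : ℝ} (ha : 0 ≤ a) (hb : 0 ≤ b) (hc : 0 ≤ c) (hd : 0 ≤ d)
    (h : a - b = c - d) : g a - g b = g c - g d := by
  have := hg a d ha hd
  rw [show a + d = c + b by linarith, hg c b hc hb] at this
  linarith

theorem oddExtension_sub (hg : ∀ x y, 0 ≤ x → 0 ≤ y → g (x + y) = g x + g y)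
    {a b : ℝ} (ha : 0 ≤ a) (hb : 0 ≤ b) :
    oddExtension g (a - b) = g a - g b :=
  sub_eq_sub_of_additiveOn hg (le_max_right _ _) (le_max_right _ _) ha hb
    (by rw [max_zero_sub_max_neg_zero_eq_self])

theorem oddExtension_of_nonneg (hg : ∀ x y, 0 ≤ x → 0 ≤ y → g (x + y) = g x + g y)
    {x : ℝ} (hx : 0 ≤ x) : oddExtension g x = g x := by
  have hg0 : g 0 = 0 := by simpa using hg 0 0 le_rfl le_rfl
  simpa [hg0] using oddExtension_sub hg hx le_rfl

theorem oddExtension_add (hg : ∀ x y, 0 ≤ x → 0 ≤ y → g (x + y) = g x + g y)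
    (x y : ℝ) :
    oddExtension g (x + y) = oddExtension g x + oddExtension g y := by
  have hx := le_max_right x 0
  have hx' := le_max_right (-x) 0
  have hy := le_max_right y 0
  have hy' := le_max_right (-y) 0
  have hsum : x + y = (max x 0 + max y 0) - (max (-x) 0 + max (-y) 0) := by
    linarith [max_zero_sub_max_neg_zero_eq_self x, max_zero_sub_max_neg_zero_eq_self y]
  rw [hsum, oddExtension_sub hg (add_nonneg hx hy) (add_nonneg hx' hy'), hg _ _ hx hy,
    hg _ _ hx' hy', oddExtension, oddExtension]
  ring

theorem continuous_oddExtension (hc : ContinuousOn g (Ici 0)) : Continuous (oddExtension g) :=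
  (hc.comp_continuous (by fun_prop) fun x => le_max_right x 0).sub
    (hc.comp_continuous (by fun_prop) fun x => le_max_right (-x) 0)

theorem eq_mul_of_continuousOn_of_additiveOn
    (hg : ∀ x y, 0 ≤ x → 0 ≤ y → g (x + y) = g x + g y)
    (hc : ContinuousOn g (Ici 0)) {x : ℝ} (hx : 0 ≤ x) : g x = g 1 * x := by
  let G : ℝ →+ ℝ := AddMonoidHom.mk' (oddExtension g) (oddExtension_add hg)
  have := map_real_smul G (continuous_oddExtension hc) x 1
  simp only [smul_eq_mul, mul_one, G, AddMonoidHom.mk'_apply] at this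
  rw [← oddExtension_of_nonneg hg hx, this, oddExtension_of_nonneg hg zero_le_one, mul_comm]

end HalfLine

section MulOnHalfLine

variable {u : ℝ → ℝ}

theorem pow_of_multiplicativeOn (hu : ∀ x y, 0 ≤ x → 0 ≤ y → u (x + y) = u x * u y)
    (hu0 : u 0 = 1) {y : ℝ} (hy : 0 ≤ y) (n : ℕ) : u (n * y) = u y ^ n := by
  induction n with
  | zero => simp [hu0]
  | succ n ih =>
    rw [Nat.cast_succ, add_one_mul, hu _ _ (by positivity) hy, ih, pow_succ]

theorem pos_of_continuousOn_of_multiplicativeOn (hc : ContinuousOn u (Ici 0))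
    (hu : ∀ x y, 0 ≤ x → 0 ≤ y → u (x + y) = u x * u y) (hu0 : u 0 = 1) {x : ℝ}
    (hx : 0 ≤ x) : 0 < u x := by
  have hlim : Tendsto (fun n : ℕ => x / n) atTop (𝓝[≥] 0) :=
    tendsto_nhdsWithin_iff.2 ⟨tendsto_const_div_atTop_nhds_zero_nat x,
      Eventually.of_forall fun n => div_nonneg hx n.cast_nonneg⟩
  have hpos : ∀ᶠ n : ℕ in atTop, 0 < u (x / n) :=
    ((hc 0 self_mem_Ici).tendsto.comp hlim).eventually_const_lt (by rw [hu0]; exact one_pos)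
  obtain ⟨n, hn, hn1⟩ := (hpos.and (eventually_ge_atTop 1)).exists
  have hn0 : (n : ℝ) ≠ 0 := by positivity
  rw [← mul_div_cancel₀ x hn0, pow_of_multiplicativeOn hu hu0 (by positivity)]
  exact pow_pos hn _

theorem exists_eq_exp_mul_of_continuousOn_of_multiplicativeOn (hc : ContinuousOn u (Ici 0))
    (hu : ∀ x y, 0 ≤ x → 0 ≤ y → u (x + y) = u x * u y) (hu0 : u 0 = 1) :
    ∃ c, ∀ x, 0 ≤ x → u x = exp (c * x) := by
  have hpos x (hx : 0 ≤ x) := pos_of_continuousOn_of_multiplicativeOn hc hu hu0 hx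
  have hadd x y (hx : 0 ≤ x) (hy : 0 ≤ y) : log (u (x + y)) = log (u x) + log (u y) := by
    rw [hu x y hx hy, log_mul (hpos x hx).ne' (hpos y hy).ne']
  have hlog := hc.log fun x hx => (hpos x hx).ne'
  refine ⟨log (u 1), fun x hx => ?_⟩
  rw [← exp_log (hpos x hx), eq_mul_of_continuousOn_of_additiveOn hadd hlog hx]

end MulOnHalfLine

theorem exists_eq_rpow_of_continuousOn_of_multiplicativeOn {f : ℝ → ℝ}
    (hcf : ContinuousOn f (Ioc 0 1)) (hf1 : f 1 = 1)
    (hf : ∀ p ∈ Ioc (0 : ℝ) 1, ∀ q ∈ Ioc (0 : ℝ) 1, f (p * q) = f p * f q) :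
    ∃ α : ℝ, ∀ p ∈ Ioc (0 : ℝ) 1, f p = p ^ α := by
  have hexp x (hx : 0 ≤ x) : exp (-x) ∈ Ioc (0 : ℝ) 1 :=
    ⟨exp_pos _, exp_le_one_iff.2 (neg_nonpos.2 hx)⟩
  obtain ⟨c, hc⟩ := exists_eq_exp_mul_of_continuousOn_of_multiplicativeOn
    (u := fun x => f (exp (-x))) (hcf.comp (by fun_prop) hexp)
    (fun x y hx hy => by rw [neg_add, exp_add, hf _ (hexp x hx) _ (hexp y hy)])
    (by simp [hf1])
  refine ⟨-c, fun p hp => ?_⟩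
  have hlog : 0 ≤ -log p := neg_nonneg.2 (log_nonpos hp.1.le hp.2)
  have := hc _ hlog
  rw [neg_neg, exp_log hp.1] at this
  rw [this, rpow_def_of_pos hp.1]
  ring_nf

theorem stmt18_general (k φ : ℝ) (hk : k ≠ 0) (hφ : φ ≠ 0) (I : ℝ → ℝ)
    (hc : ContinuousOn I (Set.Ioc (0:ℝ) 1))
    (hI1 : I 1 = 0)
    (hps : ∀ p₁ ∈ Set.Ioc (0:ℝ) 1, ∀ p₂ ∈ Set.Ioc (0:ℝ) 1,
      I (p₁ * p₂) / k = I p₁ / k + I p₂ / k + φ * (I p₁ / k) * (I p₂ / k)) :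
    ∃ α : ℝ, ∀ p ∈ Set.Ioc (0:ℝ) 1, I p = k / φ * (p ^ α - 1) := by
  obtain ⟨α, hα⟩ := exists_eq_rpow_of_continuousOn_of_multiplicativeOn
    (f := fun p => 1 + φ * (I p / k)) (by fun_prop) (by simp [hI1])
    (fun p hp q hq => by simp only [hps p hp q hq]; ring)
  refine ⟨α, fun p hp => ?_⟩
  rw [← hα p hp]
  field_simp
  ring

theorem stmt18 (k φ : ℝ) (hk : k ≠ 0) (hφ : φ ≠ 0) (I : ℝ → ℝ)
    (hc : ContinuousOn I (Set.Ioc (0:ℝ) 1))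
    (hne : ¬ ∀ p ∈ Set.Ioc (0:ℝ) 1, I p = 0)
    (hI1 : I 1 = 0)
    (hps : ∀ p₁ ∈ Set.Ioc (0:ℝ) 1, ∀ p₂ ∈ Set.Ioc (0:ℝ) 1,
      I (p₁ * p₂) / k = I p₁ / k + I p₂ / k + φ * (I p₁ / k) * (I p₂ / k)) :
    ∃ α : ℝ, ∀ p ∈ Set.Ioc (0:ℝ) 1, I p = k / φ * (p ^ α - 1) :=
  stmt18_general k φ hk hφ I hc hI1 hps
end
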